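/- arXiv:1310.5535 — 5 statements merged into one kernel-verified Lean document; each statement's English description precedes it below -/
import Mathlib

section
/- Let β > 0 and 0 < ε < 1. Then for all sufficiently large positive integers Q and every positive integer q with q ≤ Q, the number of integers n with 1 ≤ n ≤ βQ and gcd(n, q) = 1 is at least (1 - ε)·βQ·φ(q)/q, where φ is Euler's totient function. -/
/-!
Legendre's identity `#{n ≤ N | (n, q) = 1} = ∑_{d ∣ q} μ(d) ⌊N / d⌋` gives the count as
`N φ(q) / q` up to an error of at most the number `2 ^ ω(q)` of squarefree divisors of `q`.
Since `q / φ(q) = ∏_{p ∣ q} p / (p - 1) ≤ 2 ^ ω(q)`, the error relative to the main term is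
`≪ 4 ^ ω(q)`; and `16 ^ ω(q) ≤ 16 ^ 16 q`, since each prime factor `p ≥ 16` of `q` pays for
its factor `16` and there are fewer than 16 others. So the relative error is `≪ √q ≤ √Q = o(βQ)`.
-/

open Finset ArithmeticFunction
open scoped ArithmeticFunction.Moebius

namespace Nat

variable {R : Type*} [CommRing R]

theorem sum_divisors_moebius (n : ℕ) :
    ∑ d ∈ n.divisors, (μ d : R) = if n = 1 then 1 else 0 := by
  simpa only [coe_mul_zeta_apply, one_apply, intCoe_apply] using
    congrArg (fun f : ArithmeticFunction R => f n) coe_moebius_mul_coe_zeta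

theorem divisors_gcd {n q : ℕ} (hq : q ≠ 0) :
    (n.gcd q).divisors = {d ∈ q.divisors | d ∣ n} := by
  ext d
  simp only [mem_divisors, mem_filter, dvd_gcd_iff, ne_eq, gcd_eq_zero_iff, hq, and_false,
    not_false_eq_true]
  tauto

theorem card_filter_coprime_Icc_eq_sum_moebius (N : ℕ) {q : ℕ} (hq : q ≠ 0) :
    (#{n ∈ Icc 1 N | n.gcd q = 1} : R) = ∑ d ∈ q.divisors, (μ d : R) * (N / d : ℕ) := by
  calc (#{n ∈ Icc 1 N | n.gcd q = 1} : R)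
      = ∑ n ∈ Ioc 0 N, ∑ d ∈ q.divisors with d ∣ n, (μ d : R) := by
        rw [natCast_card_filter]
        refine sum_congr rfl fun n _ => ?_
        rw [← divisors_gcd hq, sum_divisors_moebius]
    _ = ∑ d ∈ q.divisors, ∑ n ∈ Ioc 0 N with d ∣ n, (μ d : R) := by
        simp only [sum_filter]
        exact sum_comm
    _ = ∑ d ∈ q.divisors, (μ d : R) * (N / d : ℕ) := by
        simp only [sum_const, Ioc_filter_dvd_card_eq_div, nsmul_eq_mul, mul_comm]

theorem card_divisors_filter_squarefree {n : ℕ} (hn : n ≠ 0) :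
    #{d ∈ n.divisors | Squarefree d} = 2 ^ #n.primeFactors := by
  have := sum_divisors_filter_squarefree hn (f := fun _ => 1)
  simp only [sum_const, smul_eq_mul, mul_one, card_powerset, factors_eq] at this
  rw [this]
  rfl

theorem le_totient_mul_two_pow_card_primeFactors (n : ℕ) :
    n ≤ φ n * 2 ^ #n.primeFactors := by
  have key := totient_mul_prod_primeFactors n
  have hpos : 0 < ∏ p ∈ n.primeFactors, (p - 1) :=
    prod_pos fun p hp => by have := (prime_of_mem_primeFactors hp).two_le; omega
  have hle : ∏ p ∈ n.primeFactors, p ≤ 2 ^ #n.primeFactors * ∏ p ∈ n.primeFactors, (p - 1) := by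
    rw [← prod_const, ← prod_mul_distrib]
    exact prod_le_prod' fun p hp => by have := (prime_of_mem_primeFactors hp).two_le; omega
  refine le_of_mul_le_mul_right ?_ hpos
  calc n * ∏ p ∈ n.primeFactors, (p - 1) = φ n * ∏ p ∈ n.primeFactors, p := key.symm
    _ ≤ φ n * (2 ^ #n.primeFactors * ∏ p ∈ n.primeFactors, (p - 1)) := Nat.mul_le_mul_left _ hle
    _ = _ := by ring

theorem pow_card_primeFactors_le (k : ℕ) {n : ℕ} (hn : n ≠ 0) :
    k ^ #n.primeFactors ≤ k ^ k * n := by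
  have hsmall : #{p ∈ n.primeFactors | p < k} ≤ k := by
    simpa using card_le_card (s := {p ∈ n.primeFactors | p < k}) (t := range k)
      fun p hp => by simpa using (mem_filter.mp hp).2
  have hlarge : k ^ #{p ∈ n.primeFactors | ¬p < k} ≤ ∏ p ∈ n.primeFactors, p := by
    calc k ^ #{p ∈ n.primeFactors | ¬p < k} ≤ ∏ p ∈ n.primeFactors with ¬p < k, p := by
          rw [← prod_const]
          exact prod_le_prod' fun p hp => not_lt.mp (mem_filter.mp hp).2
      _ ≤ ∏ p ∈ n.primeFactors, p :=
          prod_le_prod_of_subset_of_one_le' (filter_subset _ _)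
            fun p hp _ => (prime_of_mem_primeFactors hp).one_le
  calc k ^ #n.primeFactors
      = k ^ #{p ∈ n.primeFactors | p < k} * k ^ #{p ∈ n.primeFactors | ¬p < k} := by
        rw [← pow_add, card_filter_add_card_filter_not]
    _ ≤ k ^ k * n := by
        gcongr ?_ * ?_
        · rcases k.eq_zero_or_pos with rfl | hk
          · simp
          · exact Nat.pow_le_pow_right hk hsmall
        · exact hlarge.trans (le_of_dvd (pos_of_ne_zero hn) (prod_primeFactors_dvd n))

theorem card_filter_coprime_Icc_self (n : ℕ) : #{m ∈ Icc 1 n | m.gcd n = 1} = φ n := by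
  rw [← filter_coprime_Ico_eq_totient n 1, add_comm, Ico_add_one_right_eq_Icc]
  exact congrArg card (filter_congr fun m _ => by rw [Nat.coprime_comm])

end Nat

open Nat

theorem sum_divisors_moebius_mul_div (N : ℝ) {q : ℕ} (hq : q ≠ 0) :
    ∑ d ∈ q.divisors, (μ d : ℝ) * (N / d) = N * φ q / q := by
  have htot : ∑ d ∈ q.divisors, (μ d : ℝ) * (q / d : ℕ) = φ q := by
    rw [← card_filter_coprime_Icc_self, card_filter_coprime_Icc_eq_sum_moebius q hq]
  rw [← htot, mul_sum, sum_div]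
  refine sum_congr rfl fun d hd => ?_
  rw [Nat.cast_div (dvd_of_mem_divisors hd) (by exact_mod_cast (pos_of_mem_divisors hd).ne')]
  field_simp

theorem mul_totient_div_sub_two_pow_le_card_filter_coprime (N : ℕ) {q : ℕ} (hq : q ≠ 0) :
    N * φ q / q - 2 ^ #q.primeFactors ≤ (#{n ∈ Icc 1 N | n.gcd q = 1} : ℝ) := by
  have hcount : (#{n ∈ Icc 1 N | n.gcd q = 1} : ℝ) =
      ∑ d ∈ q.divisors, (μ d : ℝ) * (N / d : ℕ) :=
    card_filter_coprime_Icc_eq_sum_moebius N hq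
  have hsqf : (2 ^ #q.primeFactors : ℝ) = ∑ d ∈ q.divisors, |(μ d : ℝ)| := by
    have h : (#{d ∈ q.divisors | Squarefree d} : ℝ) = 2 ^ #q.primeFactors := by
      exact_mod_cast card_divisors_filter_squarefree hq
    rw [← h, natCast_card_filter]
    push_cast [← Int.cast_abs, abs_moebius]
    rfl
  rw [hcount, hsqf, ← sum_divisors_moebius_mul_div N hq, ← sum_sub_distrib]
  refine sum_le_sum fun d _ => ?_
  have hfloor : |(N / d : ℝ) - (N / d : ℕ)| ≤ 1 := by
    have hlow : (N / d : ℝ) - 1 < (N / d : ℕ) := by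
      rw [← Nat.floor_div_eq_div (K := ℝ)]
      exact Nat.sub_one_lt_floor _
    rw [abs_le]
    constructor <;> linarith [Nat.cast_div_le (m := N) (n := d) (α := ℝ)]
  have herr : (μ d : ℝ) * ((N / d : ℝ) - (N / d : ℕ)) ≤ |(μ d : ℝ)| :=
    (le_abs_self _).trans (by rw [abs_mul]; exact mul_le_of_le_one_right (abs_nonneg _) hfloor)
  rw [mul_sub] at herr
  linarith

theorem four_pow_card_primeFactors_le_sqrt {n : ℕ} (hn : n ≠ 0) :
    (4 : ℝ) ^ #n.primeFactors ≤ 4 ^ 16 * √n := by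
  have h : (16 : ℝ) ^ #n.primeFactors ≤ 16 ^ 16 * n := by
    exact_mod_cast pow_card_primeFactors_le 16 hn
  refine (pow_le_pow_iff_left₀ (by positivity) (by positivity) two_ne_zero).mp ?_
  calc ((4 : ℝ) ^ #n.primeFactors) ^ 2 = 16 ^ #n.primeFactors := by
        rw [← pow_mul, mul_comm, pow_mul]; norm_num
    _ ≤ 16 ^ 16 * n := h
    _ = (4 ^ 16 * √n) ^ 2 := by rw [mul_pow, Real.sq_sqrt (Nat.cast_nonneg n)]; norm_num

theorem one_add_two_pow_card_primeFactors_le {q : ℕ} (hq : q ≠ 0) :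
    1 + (2 : ℝ) ^ #q.primeFactors ≤ 2 * 4 ^ 16 * √q * (φ q / q) := by
  set t : ℝ := φ q / q
  have hq' : (0 : ℝ) < q := by exact_mod_cast Nat.pos_of_ne_zero hq
  have ht : 1 ≤ t * 2 ^ #q.primeFactors := by
    rw [div_mul_eq_mul_div, le_div_iff₀ hq', one_mul]
    exact_mod_cast le_totient_mul_two_pow_card_primeFactors q
  have h4 : (4 : ℝ) ^ #q.primeFactors = 2 ^ #q.primeFactors * 2 ^ #q.primeFactors := by
    rw [← mul_pow]; norm_num
  have h2 : (1 : ℝ) ≤ 2 ^ #q.primeFactors := one_le_pow₀ one_le_two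
  calc 1 + (2 : ℝ) ^ #q.primeFactors ≤ 2 * t * 4 ^ #q.primeFactors := by
        rw [h4]; nlinarith
    _ ≤ 2 * t * (4 ^ 16 * √q) := by gcongr; exact four_pow_card_primeFactors_le_sqrt hq
    _ = 2 * 4 ^ 16 * √q * t := by ring

theorem stmt0_general (β ε : ℝ) (hβ : 0 < β) (hε0 : 0 < ε) :
    ∃ Q₀ : ℕ, ∀ Q : ℕ, Q₀ ≤ Q → ∀ q : ℕ, 1 ≤ q → q ≤ Q →
      (1 - ε) * β * Q * (Nat.totient q : ℝ) / q ≤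
        (((Finset.Icc 1 ⌊β * (Q : ℝ)⌋₊).filter fun n => Nat.gcd n q = 1).card : ℝ) := by
  refine ⟨⌈(2 * 4 ^ 16 / (ε * β)) ^ 2⌉₊, fun Q hQ q hq1 hqQ => ?_⟩
  have hq : q ≠ 0 := by omega
  set t : ℝ := φ q / q with ht_def
  have ht : t ≤ 1 := div_le_one_of_le₀ (by exact_mod_cast totient_le q) (Nat.cast_nonneg q)
  have hQ' : 2 * 4 ^ 16 ≤ ε * β * √Q := by
    rw [← div_le_iff₀' (by positivity)]
    exact Real.le_sqrt_of_sq_le (Nat.ceil_le.mp hQ)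
  have hsqrt : √q ≤ √Q := Real.sqrt_le_sqrt (by exact_mod_cast hqQ)
  have herr := one_add_two_pow_card_primeFactors_le hq
  have hcount := mul_totient_div_sub_two_pow_le_card_filter_coprime ⌊β * Q⌋₊ hq
  calc (1 - ε) * β * Q * φ q / q = β * Q * t - ε * β * √Q * √Q * t := by
        rw [ht_def]
        linear_combination (ε * β * (φ q / q : ℝ)) * Real.mul_self_sqrt (Nat.cast_nonneg Q)
    _ ≤ β * Q * t - 2 * 4 ^ 16 * √q * t := by gcongr
    _ ≤ (β * Q - 1) * t - 2 ^ #q.primeFactors := by linarith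
    _ ≤ ⌊β * Q⌋₊ * t - 2 ^ #q.primeFactors := by gcongr; exact (Nat.sub_one_lt_floor _).le
    _ ≤ _ := by rw [mul_div_assoc] at hcount; exact hcount

/-- For β > 0 and 0 < ε < 1, for all sufficiently large Q and every 1 ≤ q ≤ Q,
the number of integers n with 1 ≤ n ≤ βQ coprime to q is at least (1-ε)βQ·φ(q)/q. -/
theorem stmt0 (β ε : ℝ) (hβ : 0 < β) (hε0 : 0 < ε) (hε1 : ε < 1) :
    ∃ Q₀ : ℕ, ∀ Q : ℕ, Q₀ ≤ Q → ∀ q : ℕ, 1 ≤ q → q ≤ Q →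
      (1 - ε) * β * Q * (Nat.totient q : ℝ) / q ≤
        (((Finset.Icc 1 ⌊β * (Q : ℝ)⌋₊).filter fun n => Nat.gcd n q = 1).card : ℝ) :=
  stmt0_general β ε hβ hε0
end

section
/- Let m, n ∈ ℕ, ψ : ℕ → (0, 1/2), y ∈ ℝ^n. Let q, q' ∈ ℤ^m be linearly independent over ℝ. With F_q(y) = {Θ ∈ Mat_{n,m}(ℝ) : ‖Θq - y‖ ≤ ψ(|q|)} and 𝕀 = {Θ : |Θ| ≤ 1/2}, the Lebesgue measure of F_q(y) ∩ F_{q'}(y) ∩ 𝕀 equals 4^n ψ(|q|)^n ψ(|q'|)^n. -/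
/-!
Reduce each row θ of Θ modulo ℤ^m. Up to its null boundary, the cube [-1/2, 1/2]^m is a
fundamental domain, so it carries Lebesgue measure to the Haar probability measure of 𝕋^m. The two
conditions on θ say that the image of θ under the homomorphism 𝕋^m → 𝕋^2, θ ↦ (θ·q, θ·q'), lies in
a product of closed balls of radii ψ(|q|), ψ(|q'|). Linear independence of q, q' makes this
homomorphism surjective, so it carries Haar probability measure to Haar probability measure, and
the row set has measure 2ψ(|q|) · 2ψ(|q'|). The n rows are constrained independently.
-/

open MeasureTheory Set Matrix

variable {ι κ : Type*} [Fintype ι]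

theorem Matrix.mulVec_surjective_of_linearIndependent_row [Fintype κ] {K : Type*} [Field K]
    {M : Matrix κ ι K} (h : LinearIndependent K M.row) : Function.Surjective M.mulVec :=
  LinearMap.range_eq_top.mp <| Submodule.eq_top_of_finrank_eq <| by
    show Module.finrank K (LinearMap.range M.mulVecLin) = Module.finrank K (κ → K)
    rw [Module.finrank_fintype_fun_eq_card]; exact h.rank_matrix

noncomputable def torusDotHom (v : κ → ι → ℤ) : (ι → UnitAddCircle) →+ (κ → UnitAddCircle) where
  toFun θ k := ∑ j, v k j • θ j
  map_zero' := by ext; simp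
  map_add' θ θ' := by ext; simp [smul_add, Finset.sum_add_distrib]

theorem torusDotHom_coe (v : κ → ι → ℤ) (θ : ι → ℝ) :
    torusDotHom v (fun j => (θ j : UnitAddCircle)) =
      fun k => ((θ ⬝ᵥ fun j => (v k j : ℝ) : ℝ) : UnitAddCircle) := by
  ext k
  simp only [torusDotHom, AddMonoidHom.coe_mk, ZeroHom.coe_mk, dotProduct,
    ← AddCircle.coe_zsmul, zsmul_eq_mul, mul_comm]
  exact (map_sum (QuotientAddGroup.mk' (AddSubgroup.zmultiples (1 : ℝ))) _ _).symm

theorem continuous_torusDotHom (v : κ → ι → ℤ) : Continuous (torusDotHom v) :=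
  continuous_pi fun _ => continuous_finsetSum _ fun j _ => (continuous_apply j).zsmul _

theorem torusDotHom_surjective [Fintype κ] {v : κ → ι → ℤ}
    (hv : LinearIndependent ℝ fun k j => (v k j : ℝ)) : Function.Surjective (torusDotHom v) := by
  intro φ
  obtain ⟨x, rfl⟩ : ∃ x : κ → ℝ, (fun k => (x k : UnitAddCircle)) = φ :=
    ⟨fun k => (QuotientAddGroup.mk_surjective (φ k)).choose,
      funext fun k => (QuotientAddGroup.mk_surjective (φ k)).choose_spec⟩
  obtain ⟨θ, hθ⟩ := Matrix.mulVec_surjective_of_linearIndependent_row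
    (M := Matrix.of fun k j => (v k j : ℝ)) hv x
  refine ⟨fun j => θ j, ?_⟩
  rw [torusDotHom_coe, ← hθ]
  exact funext fun k => congrArg _ (dotProduct_comm _ _)

theorem measurePreserving_torusDotHom [Fintype κ] {v : κ → ι → ℤ}
    (hv : LinearIndependent ℝ fun k j => (v k j : ℝ)) :
    MeasurePreserving (torusDotHom v) :=
  AddMonoidHom.measurePreserving (continuous_torusDotHom v) (torusDotHom_surjective hv)
    (by simp [volume_pi, Measure.pi_univ])

theorem volume_Icc_pi_inter_preimage_coe (t : ℝ) {S : Set (ι → UnitAddCircle)}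
    (hS : MeasurableSet S) :
    volume (univ.pi (fun _ => Icc t (t + 1)) ∩ (fun θ j => (θ j : UnitAddCircle)) ⁻¹' S) =
      volume S := by
  have hcoe : Measurable fun (θ : ι → ℝ) j => (θ j : UnitAddCircle) := by fun_prop
  have hmp : MeasurePreserving (fun (θ : ι → ℝ) j => (θ j : UnitAddCircle))
      (Measure.pi fun _ => volume.restrict (Ioc t (t + 1))) volume :=
    measurePreserving_pi _ _ fun _ => UnitAddCircle.measurePreserving_mk t
  rw [inter_comm, ← Measure.restrict_apply (hcoe hS), volume_pi,
    Measure.restrict_congr_set (Measure.ae_eq_set_pi fun _ _ => Ioc_ae_eq_Icc).symm,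
    Measure.restrict_pi_pi, hmp.measure_preimage hS.nullMeasurableSet]

theorem UnitAddCircle.exists_int_abs_sub_le_iff (t ε : ℝ) :
    (∃ p : ℤ, |t - p| ≤ ε) ↔ ‖(t : UnitAddCircle)‖ ≤ ε := by
  rw [AddCircle.norm_eq, inv_one, one_mul, mul_one]
  exact ⟨fun ⟨p, hp⟩ => (round_le t p).trans hp, fun h => ⟨round t, h⟩⟩

theorem volume_cube_forall_dotProduct_near_int [Fintype κ] {v : κ → ι → ℤ}
    (hv : LinearIndependent ℝ fun k j => (v k j : ℝ)) (c ε : κ → ℝ) :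
    volume {θ : ι → ℝ | (∀ j, |θ j| ≤ 1 / 2) ∧
        ∀ k, ∃ p : ℤ, |θ ⬝ᵥ (fun j => (v k j : ℝ)) - c k - p| ≤ ε k} =
      ∏ k, ENNReal.ofReal (min 1 (2 * ε k)) := by
  set S : Set (κ → UnitAddCircle) := univ.pi fun k => Metric.closedBall (c k : UnitAddCircle) (ε k)
  have hS : MeasurableSet S := MeasurableSet.univ_pi fun _ => measurableSet_closedBall
  have hset : {θ : ι → ℝ | (∀ j, |θ j| ≤ 1 / 2) ∧
        ∀ k, ∃ p : ℤ, |θ ⬝ᵥ (fun j => (v k j : ℝ)) - c k - p| ≤ ε k} =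
      univ.pi (fun _ => Icc (-(1 / 2) : ℝ) (-(1 / 2) + 1)) ∩
        (fun (θ : ι → ℝ) j => (θ j : UnitAddCircle)) ⁻¹' (torusDotHom v ⁻¹' S) := by
    have hcube (x : ℝ) : |x| ≤ 1 / 2 ↔ x ∈ Icc (-(1 / 2)) (-(1 / 2) + 1) := by
      norm_num [abs_le]
    ext θ
    simp only [mem_ofPred_eq, hcube, mem_inter_iff, mem_preimage, mem_univ_pi, torusDotHom_coe, S,
      Metric.mem_closedBall, dist_eq_norm, ← AddCircle.coe_sub,
      UnitAddCircle.exists_int_abs_sub_le_iff]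
  rw [hset, volume_Icc_pi_inter_preimage_coe _ ((continuous_torusDotHom v).measurable hS),
    (measurePreserving_torusDotHom hv).measure_preimage hS.nullMeasurableSet, volume_pi_pi]
  simp [AddCircle.volume_closedBall]

theorem stmt5_general (m n : ℕ) (ψ : ℕ → ℝ)
    (hψ : ∀ j, 0 < ψ j ∧ ψ j < 1 / 2) (y : Fin n → ℝ) (q q' : Fin m → ℤ)
    (hind : LinearIndependent ℝ ![(fun j => (q j : ℝ)), (fun j => (q' j : ℝ))]) :
    volume {Θ : Fin n → Fin m → ℝ |
        (∀ i j, |Θ i j| ≤ 1 / 2) ∧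
        (∀ i, ∃ p : ℤ, |(∑ j, Θ i j * q j) - y i - p| ≤
          ψ (Finset.univ.sup fun j => (q j).natAbs)) ∧
        ∀ i, ∃ p : ℤ, |(∑ j, Θ i j * q' j) - y i - p| ≤
          ψ (Finset.univ.sup fun j => (q' j).natAbs)} =
      ENNReal.ofReal ((4 : ℝ) ^ n * ψ (Finset.univ.sup fun j => (q j).natAbs) ^ n *
        ψ (Finset.univ.sup fun j => (q' j).natAbs) ^ n) := by
  obtain ⟨hε₁, hε₁'⟩ := hψ (Finset.univ.sup fun j => (q j).natAbs)
  obtain ⟨hε₂, hε₂'⟩ := hψ (Finset.univ.sup fun j => (q' j).natAbs)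
  set ε₁ := ψ (Finset.univ.sup fun j => (q j).natAbs)
  set ε₂ := ψ (Finset.univ.sup fun j => (q' j).natAbs)
  have hv : LinearIndependent ℝ fun k j => ((![q, q'] k j : ℤ) : ℝ) := by
    convert hind using 1
    ext k j
    fin_cases k <;> rfl
  have hrow (c : ℝ) : volume {θ : Fin m → ℝ | (∀ j, |θ j| ≤ 1 / 2) ∧
      ∀ k, ∃ p : ℤ, |θ ⬝ᵥ (fun j => (![q, q'] k j : ℝ)) - c - p| ≤ ![ε₁, ε₂] k} =
        ENNReal.ofReal (4 * ε₁ * ε₂) := by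
    rw [volume_cube_forall_dotProduct_near_int hv (fun _ => c), Fin.prod_univ_two]
    simp only [Matrix.cons_val_zero, Matrix.cons_val_one]
    rw [min_eq_right (by linarith), min_eq_right (by linarith),
      ← ENNReal.ofReal_mul (by linarith)]
    ring_nf
  have hset : {Θ : Fin n → Fin m → ℝ | (∀ i j, |Θ i j| ≤ 1 / 2) ∧
        (∀ i, ∃ p : ℤ, |(∑ j, Θ i j * q j) - y i - p| ≤ ε₁) ∧
        ∀ i, ∃ p : ℤ, |(∑ j, Θ i j * q' j) - y i - p| ≤ ε₂} =
      univ.pi fun i => {θ : Fin m → ℝ | (∀ j, |θ j| ≤ 1 / 2) ∧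
        ∀ k, ∃ p : ℤ, |θ ⬝ᵥ (fun j => (![q, q'] k j : ℝ)) - y i - p| ≤ ![ε₁, ε₂] k} := by
    ext Θ
    simp [Fin.forall_fin_two, forall_and, dotProduct]
  rw [hset, volume_pi_pi, Finset.prod_congr rfl fun i _ => hrow (y i), Finset.prod_const,
    Finset.card_univ, Fintype.card_fin, ← ENNReal.ofReal_pow (by positivity), mul_pow,
    mul_pow]

/-- For q, q' ∈ ℤ^m linearly independent over ℝ, the set of Θ in the cube |Θ| ≤ 1/2
with ‖Θq - y‖ ≤ ψ(|q|) and ‖Θq' - y‖ ≤ ψ(|q'|) has Lebesgue measure exactly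
4^n ψ(|q|)^n ψ(|q'|)^n. -/
theorem stmt5 (m n : ℕ) (hm : 0 < m) (hn : 0 < n) (ψ : ℕ → ℝ)
    (hψ : ∀ j, 0 < ψ j ∧ ψ j < 1 / 2) (y : Fin n → ℝ) (q q' : Fin m → ℤ)
    (hind : LinearIndependent ℝ ![(fun j => (q j : ℝ)), (fun j => (q' j : ℝ))]) :
    volume {Θ : Fin n → Fin m → ℝ |
        (∀ i j, |Θ i j| ≤ 1 / 2) ∧
        (∀ i, ∃ p : ℤ, |(∑ j, Θ i j * q j) - y i - p| ≤
          ψ (Finset.univ.sup fun j => (q j).natAbs)) ∧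
        ∀ i, ∃ p : ℤ, |(∑ j, Θ i j * q' j) - y i - p| ≤
          ψ (Finset.univ.sup fun j => (q' j).natAbs)} =
      ENNReal.ofReal ((4 : ℝ) ^ n * ψ (Finset.univ.sup fun j => (q j).natAbs) ^ n *
        ψ (Finset.univ.sup fun j => (q' j).natAbs) ^ n) :=
  stmt5_general m n ψ hψ y q q' hind
end

section
/- Let y ∈ ℝ^n, a ∈ ℤ^m nonzero, and q, q' coprime integers with |q| ≥ |q'| > 0. Set Q = qa, Q' = q'a, and for r > 0 let B_s(y, r) = {z ∈ 𝕋^n : ‖sz - y‖ ≤ r} for an integer s ≠ 0. Then for any r, r' ∈ (0, 1/2), the Haar measure of B_q(y, r) ∩ B_{q'}(y, r') is at most 12^n r^n max(r', 1/|q|)^n. -/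
/-!
Both conditions are coordinatewise, so the set is a product and it suffices to treat `n = 1`.
If `|q t - c - p| ≤ r` and `|q' t - c - p'| ≤ r'`, then `k = q p' - q' p` lies within
`L = |q'| r + |q| r'` of `(q' - q) c`, so it takes at most `2 L + 1` values. By coprimality `k`
determines `p` modulo `q` and `p'` modulo `q'`, hence pins `t` (mod 1) to a single ball of radius
`r / |q|` and to a single ball of radius `r' / |q'|`. Summing the smaller of the two measures over
the admissible `k` gives `(2 L + 1) min (2 r / |q|, 2 r' / |q'|) ≤ 12 r max (r', 1 / |q|)`.
-/

open MeasureTheory Set Metric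

lemma volume_Ico_inter_iUnion_closedBall_add_intCast_le (b ρ : ℝ) :
    volume (Ico (0 : ℝ) 1 ∩ ⋃ s : ℤ, closedBall (b + s) ρ) ≤ ENNReal.ofReal (2 * ρ) := by
  calc _ ≤ ∑' s : ℤ, volume (Ico (0 : ℝ) 1 ∩ closedBall (b + s) ρ) := by
        rw [inter_iUnion]; exact measure_iUnion_le _
    _ = ∑' s : ℤ, volume (Ico (-s : ℝ) (-s + 1) ∩ closedBall b ρ) := tsum_congr fun s => by
        rw [← measure_preimage_add_right _ (s : ℝ), preimage_inter, preimage_add_const_Ico,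
          Metric.preimage_add_right_closedBall]
        simp [sub_eq_neg_add]
    _ = volume (⋃ s : ℤ, Ico (-s : ℝ) (-s + 1) ∩ closedBall b ρ) := by
        refine (measure_iUnion (fun s s' hss' => ?_)
          fun _ => measurableSet_Ico.inter measurableSet_closedBall).symm
        simpa using (pairwise_disjoint_Ico_intCast ℝ (neg_injective.ne hss')).mono
          inter_subset_left inter_subset_left
    _ ≤ volume (closedBall b ρ) := measure_mono (iUnion_subset fun _ => inter_subset_right)
    _ = ENNReal.ofReal (2 * ρ) := Real.volume_closedBall b ρ

lemma Int.card_Icc_ceil_sub_floor_add_le (x L : ℝ) (hL : 0 ≤ L) :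
    ((Finset.Icc ⌈x - L⌉ ⌊x + L⌋).card : ℝ) ≤ 2 * L + 1 := by
  rw [Int.card_Icc, ← Int.cast_natCast, Int.toNat_eq_max, Int.cast_max]
  refine max_le ?_ (by push_cast; linarith)
  push_cast
  linarith [Int.floor_le (x + L), Int.le_ceil (x - L)]

lemma IsCoprime.exists_eq_add_mul_of_mul_sub_mul_eq {q q' p p' P P' : ℤ} (hco : IsCoprime q q')
    (hq : q ≠ 0) (h : q * p' - q' * p = q * P' - q' * P) :
    ∃ s : ℤ, p = P + q * s ∧ p' = P' + q' * s := by
  have hkey : q * (p' - P') = q' * (p - P) := by linear_combination h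
  obtain ⟨s, hs⟩ := hco.dvd_of_dvd_mul_left ⟨p' - P', hkey.symm⟩
  refine ⟨s, by linear_combination hs, mul_left_cancel₀ hq ?_⟩
  linear_combination hkey + q' * hs

lemma mem_iUnion_closedBall_of_abs_sub_le {q p s : ℤ} (hq : q ≠ 0) {t c r : ℝ}
    (h : |q * t - c - (p + q * s : ℤ)| ≤ r) :
    t ∈ ⋃ s : ℤ, closedBall ((c + p) / q + s) (r / |(q : ℝ)|) := by
  refine mem_iUnion.2 ⟨s, ?_⟩
  have hq' : (q : ℝ) ≠ 0 := Int.cast_ne_zero.2 hq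
  rw [mem_closedBall, Real.dist_eq, le_div_iff₀ (abs_pos.2 hq'), ← abs_mul]
  calc _ = |q * t - c - (p + q * s : ℤ)| := by congr 1; field_simp; push_cast; ring
    _ ≤ r := h

lemma abs_add_mul_sub_mul_le {q q' p p' : ℤ} {t c c' r r' : ℝ}
    (hp : |q * t - c - p| ≤ r) (hp' : |q' * t - c' - p'| ≤ r') :
    |(q * c' - q' * c) + (q * p' - q' * p : ℤ)| ≤ |(q' : ℝ)| * r + |(q : ℝ)| * r' := by
  have hrew : (q * c' - q' * c) + (q * p' - q' * p : ℤ) =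
      (q' : ℝ) * (q * t - c - p) - q * (q' * t - c' - p') := by
    push_cast; ring
  rw [hrew]
  refine (abs_sub _ _).trans ?_
  rw [abs_mul, abs_mul]
  gcongr

lemma volume_Ico_inter_approx_inter_approx_le {q q' : ℤ} (hco : IsCoprime q q') (hq : q ≠ 0)
    (hq' : q' ≠ 0) {r r' : ℝ} (hr : 0 ≤ r) (hr' : 0 ≤ r') (c c' : ℝ) :
    volume {t : ℝ | t ∈ Ico (0 : ℝ) 1 ∧ (∃ p : ℤ, |q * t - c - p| ≤ r) ∧
        ∃ p : ℤ, |q' * t - c' - p| ≤ r'} ≤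
      ENNReal.ofReal ((2 * (|(q' : ℝ)| * r + |(q : ℝ)| * r') + 1) *
        min (2 * (r / |(q : ℝ)|)) (2 * (r' / |(q' : ℝ)|))) := by
  obtain ⟨u, v, huv⟩ := id hco
  set L := |(q' : ℝ)| * r + |(q : ℝ)| * r'
  set d := (q : ℝ) * c' - q' * c
  set K := Finset.Icc ⌈-d - L⌉ ⌊-d + L⌋
  -- `(-(v * k), u * k)` is a particular solution of `q * p' - q' * p = k`.
  let piece : ℤ → Set ℝ := fun k => Ico 0 1 ∩
    ((⋃ s : ℤ, closedBall ((c + (-(v * k) : ℤ)) / q + s) (r / |(q : ℝ)|)) ∩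
      ⋃ s : ℤ, closedBall ((c' + (u * k : ℤ)) / q' + s) (r' / |(q' : ℝ)|))
  have hcover : {t : ℝ | t ∈ Ico (0 : ℝ) 1 ∧ (∃ p : ℤ, |q * t - c - p| ≤ r) ∧
      ∃ p : ℤ, |q' * t - c' - p| ≤ r'} ⊆ ⋃ k ∈ K, piece k := by
    rintro t ⟨ht, ⟨p, hp⟩, ⟨p', hp'⟩⟩
    set k := q * p' - q' * p with hk
    have hdk := abs_le.1 (abs_add_mul_sub_mul_le hp hp')
    obtain ⟨s, hps, hps'⟩ := hco.exists_eq_add_mul_of_mul_sub_mul_eq (p := p) (p' := p') hq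
      (P := -(v * k)) (P' := u * k) (by linear_combination hk - k * huv)
    rw [hps] at hp
    rw [hps'] at hp'
    refine mem_biUnion (x := k) ?_ ⟨ht, mem_iUnion_closedBall_of_abs_sub_le hq hp,
      mem_iUnion_closedBall_of_abs_sub_le hq' hp'⟩
    rw [← hk] at hdk
    rw [Finset.mem_coe, Finset.mem_Icc, Int.ceil_le, Int.le_floor]
    constructor <;> linarith [hdk.1, hdk.2]
  have hpiece : ∀ k, volume (piece k) ≤
      ENNReal.ofReal (min (2 * (r / |(q : ℝ)|)) (2 * (r' / |(q' : ℝ)|))) := fun k => by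
    rw [ENNReal.ofReal_min]
    exact le_min
      ((measure_mono (inter_subset_inter_right _ inter_subset_left)).trans
        (volume_Ico_inter_iUnion_closedBall_add_intCast_le _ _))
      ((measure_mono (inter_subset_inter_right _ inter_subset_right)).trans
        (volume_Ico_inter_iUnion_closedBall_add_intCast_le _ _))
  calc _ ≤ volume (⋃ k ∈ K, piece k) := measure_mono hcover
    _ ≤ ∑ k ∈ K, volume (piece k) := measure_biUnion_finset_le _ _
    _ ≤ ∑ _k ∈ K, ENNReal.ofReal (min (2 * (r / |(q : ℝ)|)) (2 * (r' / |(q' : ℝ)|))) :=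
        Finset.sum_le_sum fun k _ => hpiece k
    _ = ENNReal.ofReal (K.card * min (2 * (r / |(q : ℝ)|)) (2 * (r' / |(q' : ℝ)|))) := by
        rw [Finset.sum_const, nsmul_eq_mul, ENNReal.ofReal_mul (by positivity),
          ENNReal.ofReal_natCast]
    _ ≤ _ := ENNReal.ofReal_le_ofReal (mul_le_mul_of_nonneg_right
        (Int.card_Icc_ceil_sub_floor_add_le _ _ (by positivity)) (by positivity))

lemma mul_min_le_twelve_mul_max {A B r r' : ℝ} (hA : 0 < A) (hB : 0 < B) (hr : 0 ≤ r)
    (hr' : 0 ≤ r') :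
    (2 * (B * r + A * r') + 1) * min (2 * (r / A)) (2 * (r' / B)) ≤
      12 * (r * max r' (1 / A)) := by
  have h₁ : 2 * (B * r) * min (2 * (r / A)) (2 * (r' / B)) ≤ 4 * (r * r') :=
    calc _ ≤ 2 * (B * r) * (2 * (r' / B)) := by gcongr; exact min_le_right _ _
      _ = 4 * (r * r') := by field_simp; ring
  have h₂ : 2 * (A * r') * min (2 * (r / A)) (2 * (r' / B)) ≤ 4 * (r * r') :=
    calc _ ≤ 2 * (A * r') * (2 * (r / A)) := by gcongr; exact min_le_left _ _
      _ = 4 * (r * r') := by field_simp; ring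
  have h₃ : min (2 * (r / A)) (2 * (r' / B)) ≤ 2 * (r * (1 / A)) :=
    (min_le_left _ _).trans_eq (by ring)
  have h₄ : r * r' ≤ r * max r' (1 / A) := by gcongr; exact le_max_left _ _
  have h₅ : r * (1 / A) ≤ r * max r' (1 / A) := by gcongr; exact le_max_right _ _
  nlinarith

theorem stmt6_general (n : ℕ) (y : Fin n → ℝ)
    (q q' : ℤ) (hco : IsCoprime q q')
    (hq' : 0 < |q'|) (hqq' : |q'| ≤ |q|)
    (r r' : ℝ) (hr : r ∈ Set.Ioo (0 : ℝ) (1 / 2)) (hr' : r' ∈ Set.Ioo (0 : ℝ) (1 / 2)) :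
    volume {z : Fin n → ℝ |
        (∀ i, z i ∈ Set.Ico (0 : ℝ) 1) ∧
        (∀ i, ∃ p : ℤ, |(q : ℝ) * z i - y i - p| ≤ r) ∧
        (∀ i, ∃ p : ℤ, |(q' : ℝ) * z i - y i - p| ≤ r')} ≤
      ENNReal.ofReal ((12 : ℝ) ^ n * r ^ n * max r' (1 / |(q : ℝ)|) ^ n) := by
  have hq'0 : q' ≠ 0 := abs_pos.1 hq'
  have hq0 : q ≠ 0 := abs_pos.1 (hq'.trans_le hqq')
  have hr0 : 0 ≤ r := hr.1.le
  have hr'0 : 0 ≤ r' := hr'.1.le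
  have hbound (c : ℝ) := (volume_Ico_inter_approx_inter_approx_le hco hq0 hq'0 hr0 hr'0 c c).trans
    (ENNReal.ofReal_le_ofReal (mul_min_le_twelve_mul_max
      (abs_pos.2 (Int.cast_ne_zero.2 hq0)) (abs_pos.2 (Int.cast_ne_zero.2 hq'0)) hr0 hr'0))
  have hpi : {z : Fin n → ℝ | (∀ i, z i ∈ Set.Ico (0 : ℝ) 1) ∧
      (∀ i, ∃ p : ℤ, |(q : ℝ) * z i - y i - p| ≤ r) ∧
      (∀ i, ∃ p : ℤ, |(q' : ℝ) * z i - y i - p| ≤ r')} =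
      univ.pi fun i => {t : ℝ | t ∈ Ico (0 : ℝ) 1 ∧ (∃ p : ℤ, |q * t - y i - p| ≤ r) ∧
        ∃ p : ℤ, |q' * t - y i - p| ≤ r'} := by
    ext z
    simp only [mem_ofPred_eq, mem_pi, mem_univ, true_implies, forall_and]
  rw [hpi, volume_pi_pi]
  calc _ ≤ ∏ _i : Fin n, ENNReal.ofReal (12 * (r * max r' (1 / |(q : ℝ)|))) :=
        Finset.prod_le_prod' fun i _ => hbound (y i)
    _ = _ := by
        rw [Finset.prod_const, Finset.card_univ, Fintype.card_fin,
          ← ENNReal.ofReal_pow (by positivity), mul_pow, mul_pow, mul_assoc]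

/-- For coprime integers q, q' with |q| ≥ |q'| > 0 and radii r, r' ∈ (0, 1/2),
the Haar measure on 𝕋^n (realized by the fundamental domain [0,1)^n) of
B_q(y, r) ∩ B_{q'}(y, r') is at most 12^n r^n max(r', 1/|q|)^n. -/
theorem stmt6 (m n : ℕ) (hm : 0 < m) (hn : 0 < n) (y : Fin n → ℝ)
    (a : Fin m → ℤ) (ha : a ≠ 0) (q q' : ℤ) (hco : IsCoprime q q')
    (hq' : 0 < |q'|) (hqq' : |q'| ≤ |q|)
    (Q Q' : Fin m → ℤ) (hQ : Q = fun i => q * a i) (hQ' : Q' = fun i => q' * a i)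
    (r r' : ℝ) (hr : r ∈ Set.Ioo (0 : ℝ) (1 / 2)) (hr' : r' ∈ Set.Ioo (0 : ℝ) (1 / 2)) :
    volume {z : Fin n → ℝ |
        (∀ i, z i ∈ Set.Ico (0 : ℝ) 1) ∧
        (∀ i, ∃ p : ℤ, |(q : ℝ) * z i - y i - p| ≤ r) ∧
        (∀ i, ∃ p : ℤ, |(q' : ℝ) * z i - y i - p| ≤ r')} ≤
      ENNReal.ofReal ((12 : ℝ) ^ n * r ^ n * max r' (1 / |(q : ℝ)|) ^ n) :=
  stmt6_general n y q q' hco hq' hqq' r r' hr hr'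
end

section
/- Let m, n ∈ ℕ, ψ : ℕ → (0,∞), and suppose ∑_{ℓ≥1} ℓ^{m-1}ψ(ℓ)^n < ∞. Then for almost every (Θ, y) ∈ Mat_{n,m}(ℝ) × ℝ^n (with respect to Lebesgue measure), there exist only finitely many pairs (q, p) ∈ ℤ^m × ℤ^n with |Θq + p - y| ≤ ψ(|q|). -/
/-!
Fix `Θ`. The `y` in a unit cube lying within `ψ ℓ` of `Θ q + ℤⁿ` for some `q` with `|q| = ℓ` form
a set of measure at most `#{q : |q| = ℓ} · (8 ψ ℓ)ⁿ ≪ ℓ^(m-1) ψ(ℓ)ⁿ`, which is summable in `ℓ`.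
By Borel–Cantelli almost every `y` lies in only finitely many of these shells, and Fubini turns
this into a statement about almost every `(Θ, y)`. Once `(Θ, y)` avoids all shells beyond some
`N`, every solution has `|q| < N`, and each `q` admits only finitely many `p`.
-/

open MeasureTheory Finset Filter

section Box

variable {κ : Type*} [Fintype κ] [DecidableEq κ]

lemma mem_Icc_neg_iff_sup_natAbs_le (q : κ → ℤ) (ℓ : ℕ) :
    q ∈ Icc (-ℓ : κ → ℤ) ℓ ↔ univ.sup (fun j => (q j).natAbs) ≤ ℓ := by
  simp only [mem_Icc, Pi.le_def, Finset.sup_le_iff, mem_univ, true_implies, ← forall_and]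
  refine forall_congr' fun j => ?_
  simp only [Pi.neg_apply, Pi.natCast_apply]
  omega

lemma mem_box_iff_sup_natAbs_eq (q : κ → ℤ) (ℓ : ℕ) :
    q ∈ (box ℓ : Finset (κ → ℤ)) ↔ univ.sup (fun j => (q j).natAbs) = ℓ := by
  cases ℓ with
  | zero =>
    rw [box_zero, mem_singleton, ← Nat.le_zero, ← mem_Icc_neg_iff_sup_natAbs_le]
    simp
  | succ ℓ =>
    rw [box_succ_eq_sdiff, Finset.mem_sdiff, mem_Icc_neg_iff_sup_natAbs_le,
      mem_Icc_neg_iff_sup_natAbs_le]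
    omega

lemma card_box_le {ℓ : ℕ} (hℓ : ℓ ≠ 0) :
    #(box ℓ : Finset (κ → ℤ)) ≤ 2 * Fintype.card κ * (3 * ℓ) ^ (Fintype.card κ - 1) := by
  obtain ⟨k, rfl⟩ := Nat.exists_eq_succ_of_ne_zero hℓ
  have hsub : Icc (-k : κ → ℤ) k ⊆ Icc (-k.succ) k.succ := Icc_subset_Icc (by simp) (by simp)
  rw [box_succ_eq_sdiff, card_sdiff_of_subset hsub]
  simp only [Pi.card_Icc, Pi.neg_apply, Pi.natCast_apply, Int.card_Icc, prod_const, card_univ]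
  have hshell : (2 * k + 3) ^ Fintype.card κ - (2 * k + 1) ^ Fintype.card κ ≤
      2 * Fintype.card κ * (2 * k + 3) ^ (Fintype.card κ - 1) := by
    grind [abs_pow_sub_pow_le (α := ℤ) (2 * k + 3) (2 * k + 1) (Fintype.card κ)]
  calc _ = (2 * k + 3) ^ Fintype.card κ - (2 * k + 1) ^ Fintype.card κ := by congr 2 <;> omega
    _ ≤ _ := hshell.trans (by gcongr; omega)

lemma summable_card_box_mul {φ : ℕ → ℝ} (hφ : ∀ ℓ, 0 ≤ φ ℓ)
    (hsum : Summable fun ℓ : ℕ => (ℓ : ℝ) ^ (Fintype.card κ - 1) * φ ℓ) :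
    Summable fun ℓ => #(box ℓ : Finset (κ → ℤ)) * φ ℓ := by
  refine .of_norm_bounded_eventually_nat
    (hsum.mul_left (2 * Fintype.card κ * 3 ^ (Fintype.card κ - 1) : ℝ)) ?_
  filter_upwards [eventually_ne_atTop 0] with ℓ hℓ
  rw [Real.norm_of_nonneg (by have := hφ ℓ; positivity), ← mul_assoc]
  gcongr
  · exact hφ ℓ
  · rw [mul_assoc, ← mul_pow]
    exact_mod_cast card_box_le hℓ

end Box

/-- For `r ≤ 1` at most four translates `v + a + [-r, r]` meet the interval; for `r > 1` the bound
exceeds its length. -/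
lemma volume_Ico_inter_nbhd_intTranslates_le (b v r : ℝ) :
    volume (Set.Ico b (b + 1) ∩ {t : ℝ | ∃ a : ℤ, |v + a - t| ≤ r}) ≤ ENNReal.ofReal (8 * r) := by
  rcases le_or_gt r 1 with hr | hr
  · set c := ⌈b - v - 1⌉
    have hsub : Set.Ico b (b + 1) ∩ {t : ℝ | ∃ a : ℤ, |v + a - t| ≤ r} ⊆
        ⋃ a ∈ Icc c (c + 3), Set.Icc (v + a - r) (v + a + r) := by
      rintro t ⟨⟨hbt, htb⟩, a, ha⟩
      rw [abs_le] at ha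
      have hc : b - v - 1 ≤ c := Int.le_ceil _
      have hac : c ≤ a := Int.ceil_le.2 (by linarith)
      have hca : (a : ℝ) ≤ c + 3 := by linarith
      exact Set.mem_biUnion (mem_Icc.2 ⟨hac, by exact_mod_cast hca⟩) ⟨by linarith, by linarith⟩
    have hlen (a : ℤ) : v + a + r - (v + a - r) = 2 * r := by ring
    calc _ ≤ _ := measure_mono hsub
      _ ≤ ∑ a ∈ Icc c (c + 3), volume (Set.Icc (v + a - r) (v + a + r)) :=
          measure_biUnion_finset_le _ _
      _ = ENNReal.ofReal (8 * r) := by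
          simp only [Real.volume_Icc, hlen, sum_const, Int.card_Icc]
          rw [show (c + 3 + 1 - c).toNat = 4 by omega, nsmul_eq_mul,
            show 8 * r = 4 * (2 * r) by ring, ENNReal.ofReal_mul (by norm_num)]
          norm_num
  · calc _ ≤ volume (Set.Ico b (b + 1)) := measure_mono Set.inter_subset_left
      _ ≤ ENNReal.ofReal (8 * r) := by
          rw [Real.volume_Ico]
          exact ENNReal.ofReal_le_ofReal (by linarith)

section Lattice

variable {ι κ : Type*}

def latticeNbhd (v : ι → ℝ) (r : ℝ) : Set (ι → ℝ) :=
  {y | ∃ p : ι → ℤ, ∀ i, |v i + p i - y i| ≤ r}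

def unitCube (k : ι → ℤ) : Set (ι → ℝ) :=
  Set.univ.pi fun i => Set.Ico (k i : ℝ) (k i + 1)

lemma iUnion_unitCube : ⋃ k : ι → ℤ, unitCube k = Set.univ :=
  Set.eq_univ_of_forall fun y => Set.mem_iUnion.2
    ⟨fun i => ⌊y i⌋, fun _ _ => ⟨Int.floor_le _, Int.lt_floor_add_one _⟩⟩

variable [Fintype ι]

lemma measurableSet_unitCube (k : ι → ℤ) : MeasurableSet (unitCube k) :=
  .univ_pi fun _ => measurableSet_Ico

lemma volume_latticeNbhd_inter_unitCube_le (v : ι → ℝ) (r : ℝ) (k : ι → ℤ) :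
    volume (latticeNbhd v r ∩ unitCube k) ≤ ENNReal.ofReal (8 * r) ^ Fintype.card ι := by
  have hsub : latticeNbhd v r ∩ unitCube k ⊆ Set.univ.pi fun i =>
      Set.Ico (k i : ℝ) (k i + 1) ∩ {t : ℝ | ∃ a : ℤ, |v i + a - t| ≤ r} :=
    fun _ ⟨⟨p, hp⟩, hy⟩ i _ => ⟨hy i trivial, p i, hp i⟩
  calc _ ≤ _ := measure_mono hsub
    _ = ∏ i, volume (Set.Ico (k i : ℝ) (k i + 1) ∩ {t : ℝ | ∃ a : ℤ, |v i + a - t| ≤ r}) :=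
        volume_pi_pi _
    _ ≤ _ := prod_le_pow_card _ _ _ fun _ _ => volume_Ico_inter_nbhd_intTranslates_le _ _ _

lemma finite_setOf_abs_add_sub_le (v y : ι → ℝ) (r : ℝ) :
    {p : ι → ℤ | ∀ i, |v i + p i - y i| ≤ r}.Finite := by
  refine (Set.Finite.pi fun i => Set.finite_Icc ⌈y i - v i - r⌉ ⌊y i - v i + r⌋).subset
    fun p hp i _ => ?_
  have := abs_le.1 (hp i)
  exact ⟨Int.ceil_le.2 (by linarith), Int.le_floor.2 (by linarith)⟩

variable [Fintype κ] [DecidableEq κ] {ψ : ℕ → ℝ}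

def approxShell (ψ : ℕ → ℝ) (ℓ : ℕ) : Set ((ι → κ → ℝ) × (ι → ℝ)) :=
  {x | ∃ q ∈ (box ℓ : Finset (κ → ℤ)), x.2 ∈ latticeNbhd (fun i => ∑ j, x.1 i j * q j) (ψ ℓ)}

lemma measurableSet_approxShell (ψ : ℕ → ℝ) (ℓ : ℕ) :
    MeasurableSet (approxShell (ι := ι) (κ := κ) ψ ℓ) := by
  have hunion : approxShell (ι := ι) (κ := κ) ψ ℓ = ⋃ q ∈ (box ℓ : Finset (κ → ℤ)),
      ⋃ p : ι → ℤ, ⋂ i, {x | |∑ j, x.1 i j * (q j : ℝ) + p i - x.2 i| ≤ ψ ℓ} := by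
    ext; simp [approxShell, latticeNbhd]
  rw [hunion]
  exact Finset.measurableSet_biUnion _ fun q _ => .iUnion fun p => .iInter fun i =>
    measurableSet_le (by fun_prop) measurable_const

lemma ae_eventually_notMem_approxShell_prodMk (hψ : ∀ ℓ, 0 ≤ ψ ℓ)
    (hsum : Summable fun ℓ : ℕ => (ℓ : ℝ) ^ (Fintype.card κ - 1) * ψ ℓ ^ Fintype.card ι)
    (Θ : ι → κ → ℝ) : ∀ᵐ y, ∀ᶠ ℓ in atTop, (Θ, y) ∉ approxShell ψ ℓ := by
  rw [← Measure.restrict_univ (μ := volume), ← iUnion_unitCube, ae_restrict_iUnion_iff]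
  intro k
  set g : ℕ → ℝ := fun ℓ => #(box ℓ : Finset (κ → ℤ)) * (8 * ψ ℓ) ^ Fintype.card ι
  have hg : Summable g := by
    simp only [g, mul_pow, mul_left_comm _ ((8 : ℝ) ^ _)]
    exact (summable_card_box_mul (fun ℓ => pow_nonneg (hψ ℓ) _) hsum).mul_left _
  have hshell (ℓ : ℕ) :
      volume.restrict (unitCube k) (Prod.mk Θ ⁻¹' approxShell ψ ℓ) ≤ ENNReal.ofReal (g ℓ) := by
    have hunion : Prod.mk Θ ⁻¹' approxShell ψ ℓ =
        ⋃ q ∈ (box ℓ : Finset (κ → ℤ)), latticeNbhd (fun i => ∑ j, Θ i j * q j) (ψ ℓ) := by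
      ext; simp [approxShell]
    calc _ ≤ ∑ q ∈ (box ℓ : Finset (κ → ℤ)),
          volume (latticeNbhd (fun i => ∑ j, Θ i j * q j) (ψ ℓ) ∩ unitCube k) := by
          rw [hunion]
          refine (measure_biUnion_finset_le _ _).trans (sum_le_sum fun q _ => ?_)
          rw [Measure.restrict_apply' (measurableSet_unitCube k)]
      _ ≤ ∑ _q ∈ (box ℓ : Finset (κ → ℤ)), ENNReal.ofReal (8 * ψ ℓ) ^ Fintype.card ι :=
          sum_le_sum fun _ _ => volume_latticeNbhd_inter_unitCube_le _ _ _
      _ = ENNReal.ofReal (g ℓ) := by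
          rw [sum_const, nsmul_eq_mul, ENNReal.ofReal_mul (Nat.cast_nonneg _),
            ENNReal.ofReal_natCast, ENNReal.ofReal_pow (by linarith [hψ ℓ])]
  refine ae_eventually_notMem (ne_top_of_le_ne_top ?_ (ENNReal.tsum_le_tsum hshell))
  rw [← ENNReal.ofReal_tsum_of_nonneg (fun ℓ => by have := hψ ℓ; positivity) hg]
  exact ENNReal.ofReal_ne_top

lemma ae_eventually_notMem_approxShell (hψ : ∀ ℓ, 0 ≤ ψ ℓ)
    (hsum : Summable fun ℓ : ℕ => (ℓ : ℝ) ^ (Fintype.card κ - 1) * ψ ℓ ^ Fintype.card ι) :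
    ∀ᵐ x : (ι → κ → ℝ) × (ι → ℝ), ∀ᶠ ℓ in atTop, x ∉ approxShell ψ ℓ := by
  have hmeas : MeasurableSet
      {x : (ι → κ → ℝ) × (ι → ℝ) | ∀ᶠ ℓ in atTop, x ∉ approxShell ψ ℓ} := by
    simp_rw [← Set.mem_compl_iff, ← mem_liminf_iff_eventually_mem]
    exact .measurableSet_liminf fun ℓ => (measurableSet_approxShell ψ ℓ).compl
  rw [Measure.volume_eq_prod]
  exact (Measure.ae_prod_mem_iff_ae_ae_mem hmeas).2
    (ae_of_all _ (ae_eventually_notMem_approxShell_prodMk hψ hsum))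

lemma finite_setOf_approx_of_eventually_notMem_approxShell {x : (ι → κ → ℝ) × (ι → ℝ)}
    (hx : ∀ᶠ ℓ in atTop, x ∉ approxShell ψ ℓ) :
    {qp : (κ → ℤ) × (ι → ℤ) | ∀ i, |(∑ j, x.1 i j * qp.1 j) + qp.2 i - x.2 i| ≤
      ψ (univ.sup fun j => (qp.1 j).natAbs)}.Finite := by
  obtain ⟨N, hN⟩ := eventually_atTop.1 hx
  refine ((Icc (-N : κ → ℤ) N).finite_toSet.biUnion fun q _ => (Set.finite_singleton q).prod
    (finite_setOf_abs_add_sub_le (fun i => ∑ j, x.1 i j * q j) x.2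
      (ψ (univ.sup fun j => (q j).natAbs)))).subset ?_
  rintro ⟨q, p⟩ hqp
  have hq : q ∈ Icc (-N : κ → ℤ) N := by
    rw [mem_Icc_neg_iff_sup_natAbs_le]
    by_contra! h
    exact hN _ h.le ⟨q, (mem_box_iff_sup_natAbs_eq q _).2 rfl, p, hqp⟩
  exact Set.mem_biUnion hq ⟨rfl, hqp⟩

end Lattice

theorem stmt7_general (m n : ℕ) (ψ : ℕ → ℝ) (hψ : ∀ j, 0 < ψ j)
    (hsum : Summable fun ℓ : ℕ => (ℓ : ℝ) ^ (m - 1) * ψ ℓ ^ n) :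
    ∀ᵐ Θy : (Fin n → Fin m → ℝ) × (Fin n → ℝ) ∂volume,
      {qp : (Fin m → ℤ) × (Fin n → ℤ) |
        ∀ i, |(∑ j, Θy.1 i j * qp.1 j) + qp.2 i - Θy.2 i| ≤
          ψ (Finset.univ.sup fun j => (qp.1 j).natAbs)}.Finite := by
  have hsum' : Summable fun ℓ : ℕ =>
      (ℓ : ℝ) ^ (Fintype.card (Fin m) - 1) * ψ ℓ ^ Fintype.card (Fin n) := by
    simpa using hsum
  filter_upwards [ae_eventually_notMem_approxShell (fun ℓ => (hψ ℓ).le) hsum'] with x hx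
  exact finite_setOf_approx_of_eventually_notMem_approxShell hx

/-- Convergence half of the doubly metric inhomogeneous Khintchine–Groshev theorem:
if ∑ ℓ^{m-1} ψ(ℓ)^n < ∞, then for almost every (Θ, y) only finitely many
(q, p) ∈ ℤ^m × ℤ^n satisfy |Θq + p - y| ≤ ψ(|q|). -/
theorem stmt7 (m n : ℕ) (hm : 0 < m) (hn : 0 < n) (ψ : ℕ → ℝ) (hψ : ∀ j, 0 < ψ j)
    (hsum : Summable fun ℓ : ℕ => (ℓ : ℝ) ^ (m - 1) * ψ ℓ ^ n) :
    ∀ᵐ Θy : (Fin n → Fin m → ℝ) × (Fin n → ℝ) ∂volume,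
      {qp : (Fin m → ℤ) × (Fin n → ℤ) |
        ∀ i, |(∑ j, Θy.1 i j * qp.1 j) + qp.2 i - Θy.2 i| ≤
          ψ (Finset.univ.sup fun j => (qp.1 j).natAbs)}.Finite :=
  stmt7_general m n ψ hψ hsum
end

section
/- The partial sums ∑_{j=1}^{ℓ} φ(j)/j are asymptotically equivalent to ℓ/ζ(2) as ℓ → ∞. -/
/-!
Möbius inversion of `∑_{d ∣ n} φ(d) = n` gives `φ(n)/n = ∑_{d ∣ n} μ(d)/d`, so exchanging the
order of summation, `∑_{n ≤ N} φ(n)/n = ∑_{d ≤ N} (μ(d)/d) ⌊N/d⌋`. Replacing `⌊N/d⌋` by `N/d`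
costs at most `1/d` per term, `O(log N)` in total, and what remains is `N ∑_{d ≤ N} μ(d)/d²`,
where `∑_d μ(d)/d² = 1/ζ(2) = 6/π²`.
-/

open Finset Filter Real ArithmeticFunction
open scoped ArithmeticFunction.Moebius ArithmeticFunction.zeta Nat Topology

theorem LSeries_moebius_eq_inv_riemannZeta {s : ℂ} (hs : 1 < s.re) :
    LSeries (fun n => (μ n : ℂ)) s = (riemannZeta s)⁻¹ :=
  eq_inv_of_mul_eq_one_right <|
    LSeries_zeta_eq_riemannZeta hs ▸ LSeries_zeta_mul_Lseries_moebius hs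

theorem hasSum_moebius_div_sq : HasSum (fun n : ℕ => (μ n : ℝ) / n ^ 2) (6 / π ^ 2) := by
  have hs : 1 < (2 : ℂ).re := by norm_num
  have h := (LSeriesSummable_moebius_iff.mpr hs).LSeriesHasSum
  rw [LSeriesHasSum, LSeries_moebius_eq_inv_riemannZeta hs, riemannZeta_two] at h
  refine Complex.hasSum_ofReal.mp ?_
  convert h using 1
  · ext n
    rw [LSeries.term_def₀ (by simp) 2 n, Complex.cpow_neg, Complex.cpow_ofNat]
    push_cast
    ring
  · push_cast
    rw [inv_div]

theorem sum_divisors_moebius_div_eq_totient_div {K : Type*} [Field K] [CharZero K] (n : ℕ) :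
    ∑ d ∈ n.divisors, (μ d : K) / d = φ n / n := by
  rcases Nat.eq_zero_or_pos n with rfl | hn
  · simp
  have hφ := (sum_eq_iff_sum_mul_moebius_eq (f := fun m => (φ m : K)) (g := Nat.cast)).mp
    (fun m _ => by exact_mod_cast Nat.sum_totient m) n hn
  rw [← hφ, Nat.sum_divisorsAntidiagonal (f := fun d e => (μ d : K) * e), sum_div]
  refine sum_congr rfl fun d hd => ?_
  have hd0 : (d : K) ≠ 0 := Nat.cast_ne_zero.mpr (Nat.pos_of_mem_divisors hd).ne'
  have hn0 : (n : K) ≠ 0 := Nat.cast_ne_zero.mpr hn.ne'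
  rw [Nat.cast_div (Nat.dvd_of_mem_divisors hd) hd0]
  field_simp

theorem sum_Icc_sum_divisors_eq_sum_mul_div {R : Type*} [Semiring R] (a : ℕ → R) (N : ℕ) :
    ∑ n ∈ Icc 1 N, ∑ d ∈ n.divisors, a d = ∑ d ∈ Icc 1 N, a d * (N / d : ℕ) := by
  let f : ArithmeticFunction R := ⟨fun n => if n = 0 then 0 else a n, if_pos rfl⟩
  have hf : ∀ n, n ≠ 0 → f n = a n := fun n hn => if_neg hn
  have h := sum_Ioc_mul_zeta_eq_sum f N
  simp_rw [coe_mul_zeta_apply] at h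
  convert h using 1 <;> refine sum_congr rfl fun n hn => ?_
  · exact sum_congr rfl fun d hd => (hf d (Nat.pos_of_mem_divisors hd).ne').symm
  · rw [hf n (mem_Ioc.mp hn).1.ne']

theorem Nat.abs_cast_div_sub_div_le_one {K : Type*} [Field K] [LinearOrder K]
    [IsStrictOrderedRing K] [FloorSemiring K] (N d : ℕ) :
    |((N / d : ℕ) : K) - N / d| ≤ 1 := by
  rw [← Nat.floor_div_eq_div (K := K)]
  have hlo := Nat.floor_le (a := (N / d : K)) (by positivity)
  have hhi := Nat.lt_floor_add_one (N / d : K)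
  exact abs_le.mpr ⟨by linarith, by linarith⟩

theorem abs_sum_mul_div_sub_mul_sum_le_harmonic (a : ℕ → ℝ) (ha : ∀ n, |a n| ≤ 1) (N : ℕ) :
    |∑ d ∈ Icc 1 N, a d / d * (N / d : ℕ) - N * ∑ d ∈ Icc 1 N, a d / d ^ 2| ≤ harmonic N := by
  rw [harmonic_eq_sum_Icc, mul_sum, ← sum_sub_distrib]
  push_cast
  refine (abs_sum_le_sum_abs _ _).trans (sum_le_sum fun d hd => ?_)
  have hd : (0 : ℝ) < d := by exact_mod_cast (mem_Icc.mp hd).1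
  calc |a d / d * (N / d : ℕ) - N * (a d / d ^ 2)|
      = |a d / d * (((N / d : ℕ) : ℝ) - N / d)| := by
        congr 1
        field_simp
    _ = |a d| / d * |((N / d : ℕ) : ℝ) - N / d| := by rw [abs_mul, abs_div, abs_of_pos hd]
    _ ≤ 1 / d * 1 := by
        gcongr
        exacts [ha d, Nat.abs_cast_div_sub_div_le_one N d]
    _ = (d : ℝ)⁻¹ := by rw [mul_one, one_div]

theorem tendsto_harmonic_div_atTop :
    Tendsto (fun n : ℕ => (harmonic n : ℝ) / n) atTop (𝓝 0) := by
  have hlog : Tendsto (fun x : ℝ => (1 + log x) / x) atTop (𝓝 0) := by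
    simpa using ((Asymptotics.isLittleO_const_id_atTop 1).add
      isLittleO_log_id_atTop).tendsto_div_nhds_zero
  refine squeeze_zero (fun n => by rw [harmonic_eq_sum_Icc]; positivity) (fun n => ?_)
    (hlog.comp tendsto_natCast_atTop_atTop)
  exact div_le_div_of_nonneg_right (harmonic_le_one_add_log n) n.cast_nonneg

theorem tendsto_sum_Icc_moebius_div_sq :
    Tendsto (fun N : ℕ => ∑ d ∈ Icc 1 N, (μ d : ℝ) / d ^ 2) atTop (𝓝 (6 / π ^ 2)) := by
  refine (hasSum_moebius_div_sq.tendsto_sum_nat.comp (tendsto_add_atTop_nat 1)).congr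
    fun N => ?_
  change _ = ∑ d ∈ Ioc 0 N, _
  rw [Function.comp_apply, Nat.range_succ_eq_Icc_zero, ← add_sum_Ioc_eq_sum_Icc N.zero_le]
  simp

theorem tendsto_sum_totient_div_div_atTop :
    Tendsto (fun N : ℕ => (∑ n ∈ Icc 1 N, (φ n : ℝ) / n) / N) atTop (𝓝 (6 / π ^ 2)) := by
  set S := fun N : ℕ => ∑ n ∈ Icc 1 N, (φ n : ℝ) / n
  set P := fun N : ℕ => ∑ d ∈ Icc 1 N, (μ d : ℝ) / d ^ 2
  have hS : ∀ N, S N = ∑ d ∈ Icc 1 N, (μ d : ℝ) / d * (N / d : ℕ) := fun N => by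
    simp_rw [S, ← sum_divisors_moebius_div_eq_totient_div, sum_Icc_sum_divisors_eq_sum_mul_div]
  have hE : Tendsto (fun N : ℕ => (S N - N * P N) / N) atTop (𝓝 0) := by
    refine squeeze_zero_norm (fun N => ?_) tendsto_harmonic_div_atTop
    rw [norm_div, Real.norm_natCast, hS]
    gcongr
    exact abs_sum_mul_div_sub_mul_sum_le_harmonic _ (fun d => mod_cast abs_moebius_le_one) N
  refine (add_zero (6 / π ^ 2) ▸ tendsto_sum_Icc_moebius_div_sq.add hE).congr' ?_
  filter_upwards [eventually_ne_atTop 0] with N hN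
  field_simp
  ring

/-- The partial sums ∑_{j=1}^{ℓ} φ(j)/j are asymptotically equivalent to ℓ/ζ(2),
where ζ(2) = π²/6. -/
theorem stmt12 :
    Filter.Tendsto (fun ℓ : ℕ =>
        (∑ j ∈ Finset.Icc 1 ℓ, (Nat.totient j : ℝ) / j) / ((ℓ : ℝ) / (Real.pi ^ 2 / 6)))
      Filter.atTop (nhds 1) := by
  have h := tendsto_sum_totient_div_div_atTop.mul_const (π ^ 2 / 6)
  rw [div_mul_div_cancel₀ (by positivity), div_self (by norm_num)] at h
  exact h.congr fun ℓ => by rw [div_div_eq_mul_div, mul_div_right_comm]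
end
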